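/- Fix natural numbers n, k with k ≤ n, and a natural number a. Then the number of ordered pairs (p, q), where p, q : {1,...,n} → {+1, −1} are sequences each with exactly k entries equal to +1, such that Σ_{i=1}^n |P_i − Q_i| = 2a (where P_i = p_1 + ... + p_i and Q_i = q_1 + ... + q_i are the partial sums), equals the number of step words r : {1,...,n} → {U, D, O1, O2} such that H_n = 0, exactly k of the steps of r lie in {U, O1}, and Σ_{i=1}^n |H_i| = a (where H_i is the sum of the weights of the first i steps of r, with weights w(U)=1, w(D)=−1, w(O1)=w(O2)=0). -/

import Mathlib

/-- The four kinds of steps: up, down, and two colors of horizontal steps. -/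
inductive Step where
  | U : Step
  | D : Step
  | O1 : Step
  | O2 : Step
deriving DecidableEq

instance : Fintype Step where
  elems := {Step.U, Step.D, Step.O1, Step.O2}
  complete := by intro x; cases x <;> simp

/-- Weight of a step: U has weight 1, D has weight −1, O1 and O2 weight 0. -/
def Step.wt : Step → ℤ
  | .U => 1
  | .D => -1
  | .O1 => 0
  | .O2 => 0

/-- Height of a step word after its first `i` steps. -/
def stepHeight {n : ℕ} (r : Fin n → Step) (i : ℕ) : ℤ :=
  ∑ j ∈ Finset.univ.filter (fun j : Fin n => (j : ℕ) < i), (r j).wt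

/-- Partial sum of a `±1`-sequence after its first `i` entries. -/
def partialSum {n : ℕ} (p : Fin n → ℤ) (i : ℕ) : ℤ :=
  ∑ j ∈ Finset.univ.filter (fun j : Fin n => (j : ℕ) < i), p j

/-! A step is the same thing as a pair of signs: `U ↔ (1, -1)`, `D ↔ (-1, 1)`, `O1 ↔ (1, 1)`,
`O2 ↔ (-1, -1)`. Under this correspondence the weight of a step is half the difference of its two
signs, so the height `H_i` of a step word is half of `P_i - Q_i` for the corresponding pair of
sign sequences. The steps in `{U, O1}` are those whose first sign is `+1`, and since `H_n` is the
number of `+1`s in the first sign sequence minus that in the second, `H_n = 0` says that both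
sequences have the same number `k` of `+1`s. -/

namespace Step

def pSign : Step → ℤ
  | .U => 1 | .D => -1 | .O1 => 1 | .O2 => -1

def qSign : Step → ℤ
  | .U => -1 | .D => 1 | .O1 => 1 | .O2 => -1

def ofSigns (x y : ℤ) : Step :=
  if x = 1 then (if y = 1 then .O1 else .U) else (if y = 1 then .D else .O2)

lemma pSign_eq_one_or (s : Step) : s.pSign = 1 ∨ s.pSign = -1 := by
  cases s <;> simp [pSign]

lemma qSign_eq_one_or (s : Step) : s.qSign = 1 ∨ s.qSign = -1 := by
  cases s <;> simp [qSign]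

lemma ofSigns_pSign_qSign (s : Step) : ofSigns s.pSign s.qSign = s := by
  cases s <;> simp [ofSigns, pSign, qSign]

lemma pSign_ofSigns {x y : ℤ} (hx : x = 1 ∨ x = -1) (hy : y = 1 ∨ y = -1) :
    (ofSigns x y).pSign = x := by
  rcases hx with rfl | rfl <;> rcases hy with rfl | rfl <;> simp [ofSigns, pSign]

lemma qSign_ofSigns {x y : ℤ} (hx : x = 1 ∨ x = -1) (hy : y = 1 ∨ y = -1) :
    (ofSigns x y).qSign = y := by
  rcases hx with rfl | rfl <;> rcases hy with rfl | rfl <;> simp [ofSigns, qSign]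

lemma pSign_eq_one_iff (s : Step) : s.pSign = 1 ↔ s = .U ∨ s = .O1 := by
  cases s <;> simp [pSign]

lemma two_mul_wt (s : Step) : 2 * s.wt = s.pSign - s.qSign := by
  cases s <;> simp [wt, pSign, qSign]

lemma wt_eq_ite_sub_ite (s : Step) :
    s.wt = (if s.pSign = 1 then 1 else 0) - (if s.qSign = 1 then 1 else 0) := by
  cases s <;> simp [wt, pSign, qSign]

end Step

section StepWord

variable {n : ℕ}

def signSeqsEquiv : (Fin n → Step) ≃ {pq : (Fin n → ℤ) × (Fin n → ℤ) //
    (∀ i, pq.1 i = 1 ∨ pq.1 i = -1) ∧ (∀ i, pq.2 i = 1 ∨ pq.2 i = -1)} where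
  toFun r := ⟨(fun i => (r i).pSign, fun i => (r i).qSign),
    fun i => (r i).pSign_eq_one_or, fun i => (r i).qSign_eq_one_or⟩
  invFun pq i := Step.ofSigns (pq.1.1 i) (pq.1.2 i)
  left_inv r := funext fun i => Step.ofSigns_pSign_qSign (r i)
  right_inv := by
    rintro ⟨⟨p, q⟩, hp, hq⟩
    ext i
    · exact Step.pSign_ofSigns (hp i) (hq i)
    · exact Step.qSign_ofSigns (hp i) (hq i)

lemma two_mul_stepHeight (r : Fin n → Step) (i : ℕ) :
    2 * stepHeight r i =
      partialSum (fun j => (r j).pSign) i - partialSum (fun j => (r j).qSign) i := by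
  simp only [stepHeight, partialSum, Finset.mul_sum, ← Finset.sum_sub_distrib, Step.two_mul_wt]

lemma stepHeight_self (r : Fin n → Step) :
    stepHeight r n = (Finset.univ.filter fun i => (r i).pSign = 1).card -
      (Finset.univ.filter fun i => (r i).qSign = 1).card := by
  have hall : Finset.univ.filter (fun j : Fin n => (j : ℕ) < n) = Finset.univ :=
    Finset.filter_true_of_mem fun j _ => j.isLt
  simp only [stepHeight, hall, Step.wt_eq_ite_sub_ite, Finset.sum_sub_distrib, Finset.sum_boole]

lemma sum_abs_partialSum_sub (r : Fin n → Step) :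
    ∑ i ∈ Finset.range n, |partialSum (fun j => (r j).pSign) (i + 1) -
        partialSum (fun j => (r j).qSign) (i + 1)| =
      2 * ∑ i ∈ Finset.range n, |stepHeight r (i + 1)| := by
  simp only [Finset.mul_sum, ← two_mul_stepHeight, abs_mul, abs_two]

lemma bilateralMotzkin_iff_signSeqs (r : Fin n → Step) (k a : ℕ) :
    (stepHeight r n = 0 ∧
        (Finset.univ.filter fun i => r i = Step.U ∨ r i = Step.O1).card = k ∧
        ∑ i ∈ Finset.range n, |stepHeight r (i + 1)| = (a : ℤ)) ↔
      ((Finset.univ.filter fun i => (r i).pSign = 1).card = k ∧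
        (Finset.univ.filter fun i => (r i).qSign = 1).card = k ∧
        ∑ i ∈ Finset.range n, |partialSum (fun j => (r j).pSign) (i + 1) -
          partialSum (fun j => (r j).qSign) (i + 1)| = 2 * (a : ℤ)) := by
  have hcard : (Finset.univ.filter fun i => r i = Step.U ∨ r i = Step.O1) =
      Finset.univ.filter fun i => (r i).pSign = 1 :=
    Finset.filter_congr fun i _ => (Step.pSign_eq_one_iff (r i)).symm
  rw [hcard, sum_abs_partialSum_sub, stepHeight_self]
  omega

end StepWord

theorem card_pairs_eq_card_bilateralMotzkin_general (n k a : ℕ) :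
    Nat.card {pq : (Fin n → ℤ) × (Fin n → ℤ) //
        (∀ i, pq.1 i = 1 ∨ pq.1 i = -1) ∧ (∀ i, pq.2 i = 1 ∨ pq.2 i = -1) ∧
        (Finset.univ.filter fun i => pq.1 i = 1).card = k ∧
        (Finset.univ.filter fun i => pq.2 i = 1).card = k ∧
        (∑ i ∈ Finset.range n, |partialSum pq.1 (i + 1) - partialSum pq.2 (i + 1)|)
          = 2 * (a : ℤ)}
      = Nat.card {r : Fin n → Step //
        stepHeight r n = 0 ∧
        (Finset.univ.filter fun i => r i = Step.U ∨ r i = Step.O1).card = k ∧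
        (∑ i ∈ Finset.range n, |stepHeight r (i + 1)|) = (a : ℤ)} := by
  refine Nat.card_congr ((Equiv.subtypeEquivRight fun _ => and_assoc.symm).trans ?_)
  exact (Equiv.subtypeSubtypeEquivSubtypeInter _ _).symm.trans
    (Equiv.subtypeEquiv signSeqsEquiv fun r => bilateralMotzkin_iff_signSeqs r k a).symm

/-- The bijection $A$: ordered pairs of $±1$-sequences of length $n$, each with
exactly $k$ entries equal to $+1$, whose partial sums satisfy
$\sum_{i=1}^n |P_i - Q_i| = 2a$, are equinumerous with step words of length $n$
with final height $0$, exactly $k$ steps in $\{U, O_1\}$, and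
$\sum_{i=1}^n |H_i| = a$. -/
theorem card_pairs_eq_card_bilateralMotzkin (n k a : ℕ) (hk : k ≤ n) :
    Nat.card {pq : (Fin n → ℤ) × (Fin n → ℤ) //
        (∀ i, pq.1 i = 1 ∨ pq.1 i = -1) ∧ (∀ i, pq.2 i = 1 ∨ pq.2 i = -1) ∧
        (Finset.univ.filter fun i => pq.1 i = 1).card = k ∧
        (Finset.univ.filter fun i => pq.2 i = 1).card = k ∧
        (∑ i ∈ Finset.range n, |partialSum pq.1 (i + 1) - partialSum pq.2 (i + 1)|)
          = 2 * (a : ℤ)}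
      = Nat.card {r : Fin n → Step //
        stepHeight r n = 0 ∧
        (Finset.univ.filter fun i => r i = Step.U ∨ r i = Step.O1).card = k ∧
        (∑ i ∈ Finset.range n, |stepHeight r (i + 1)|) = (a : ℤ)} :=
  card_pairs_eq_card_bilateralMotzkin_general n k a
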